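/- arXiv:1012.5274 — 3 statements merged into one kernel-verified Lean document; each statement's English description precedes it below -/
import Mathlib

section
/- Let V : ℝⁿ → ℝ be smooth and let μ be the probability measure on ℝⁿ with density e^{-V} with respect to Lebesgue measure; set Lg = Δg − ∇V·∇g. Then for every smooth function W : ℝⁿ → ℝ with W ≥ 1 and every smooth compactly supported f : ℝⁿ → ℝ, one has ∫ (−LW/W) f² dμ ≤ ∫ |∇f|² dμ, i.e. ∫ ((−ΔW + ∇V·∇W)/W) f² dμ ≤ ∫ |∇f|² dμ. -/
open MeasureTheory Real
open scoped ENNReal RealInnerProductSpace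

/-!
Write `ρ = e^{-V}`. Integrating `Δ W` by parts against the compactly supported `φ ρ` shows that
`L` is symmetric for `μ`: `-∫ φ LW dμ = ∫ ⟪∇φ, ∇W⟫ dμ`. For `φ = f² / W` and `c = f / W`,
`⟪∇φ, ∇W⟫ = 2c ⟪∇f, ∇W⟫ - c² ‖∇W‖² = ‖∇f‖² - ‖∇f - c ∇W‖² ≤ ‖∇f‖²`.
-/

/-- The Euclidean Laplacian `Δ W = ∑ i ∂²_{ii} W` of a function on `ℝⁿ`. -/
noncomputable def euclideanLaplacian {n : ℕ} (W : EuclideanSpace ℝ (Fin n) → ℝ)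
    (x : EuclideanSpace ℝ (Fin n)) : ℝ :=
  ∑ i : Fin n,
    fderiv ℝ (fun y => fderiv ℝ W y (EuclideanSpace.single i 1)) x (EuclideanSpace.single i 1)

section InnerProductSpace

variable {E : Type*} [NormedAddCommGroup E] [InnerProductSpace ℝ E]

theorem two_mul_inner_sub_sq_mul_norm_sq_le (a b : E) (c : ℝ) :
    2 * c * ⟪a, b⟫ - c ^ 2 * ‖b‖ ^ 2 ≤ ‖a‖ ^ 2 := by
  have h := norm_sub_sq_real a (c • b)
  rw [real_inner_smul_right, norm_smul, mul_pow, Real.norm_eq_abs, sq_abs] at h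
  nlinarith [sq_nonneg ‖a - c • b‖]

theorem HasCompactSupport.inner_left {X : Type*} [TopologicalSpace X] {f g : X → E}
    (hf : HasCompactSupport f) : HasCompactSupport fun x => ⟪f x, g x⟫ :=
  hf.mono fun x hx hfx => hx (by simp [hfx])

variable [CompleteSpace E]

theorem HasCompactSupport.gradient {f : E → ℝ} (hf : HasCompactSupport f) :
    HasCompactSupport (gradient f) :=
  (hf.fderiv (𝕜 := ℝ)).comp_left (map_zero _)

theorem ContDiff.continuous_gradient {f : E → ℝ} (hf : ContDiff ℝ 1 f) :
    Continuous (gradient f) :=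
  (InnerProductSpace.toDual ℝ E).symm.continuous.comp (hf.continuous_fderiv one_ne_zero)

theorem inner_gradient_sq_div_le {f W : E → ℝ} {x : E} (hf : DifferentiableAt ℝ f x)
    (hW : DifferentiableAt ℝ W x) (hWx : W x ≠ 0) :
    ⟪gradient (fun y => f y ^ 2 / W y) x, gradient W x⟫ ≤ ‖gradient f x‖ ^ 2 := by
  have hderiv : HasFDerivAt (fun y => f y ^ 2 * (W y)⁻¹) _ x := (hf.hasFDerivAt.pow 2).mul
    ((hasDerivAt_inv hWx).comp_hasFDerivAt x hW.hasFDerivAt)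
  simp_rw [div_eq_mul_inv]
  rw [inner_gradient_left, hderiv.fderiv]
  simp only [add_apply, smul_apply, smul_eq_mul, nsmul_eq_mul, ← inner_gradient_left,
    real_inner_self_eq_norm_sq]
  convert two_mul_inner_sub_sq_mul_norm_sq_le (gradient f x) (gradient W x) (f x / W x) using 1
  field_simp
  ring

theorem inner_gradient_mul_exp_neg {φ V : E → ℝ} {x : E} (hφ : DifferentiableAt ℝ φ x)
    (hV : DifferentiableAt ℝ V x) (v : E) :
    ⟪gradient (fun y => φ y * exp (-V y)) x, v⟫
      = exp (-V x) * (⟪gradient φ x, v⟫ - φ x * ⟪gradient V x, v⟫) := by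
  simp only [inner_gradient_left]
  have hderiv : HasFDerivAt (fun y => φ y * exp (-V y)) _ x :=
    hφ.hasFDerivAt.mul hV.hasFDerivAt.neg.exp
  rw [hderiv.fderiv]
  simp only [Pi.neg_apply, smul_neg, add_apply, neg_apply, smul_apply, smul_eq_mul]
  ring

end InnerProductSpace

theorem ContDiff.contDiff_fderiv_apply_const {E : Type*} [NormedAddCommGroup E]
    [NormedSpace ℝ E] {W : E → ℝ} {k : WithTop ℕ∞} (hW : ContDiff ℝ (k + 1) W) (v : E) :
    ContDiff ℝ k (fun y => fderiv ℝ W y v) :=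
  (hW.fderiv_right le_rfl).clm_apply contDiff_const

theorem integral_withDensity_ofReal {X : Type*} [MeasurableSpace X] {ν : Measure X} {ρ : X → ℝ}
    (hρ : Measurable ρ) (hρ0 : ∀ x, 0 ≤ ρ x) (g : X → ℝ) :
    ∫ x, g x ∂ν.withDensity (fun x => ENNReal.ofReal (ρ x)) = ∫ x, ρ x * g x ∂ν := by
  rw [integral_withDensity_eq_integral_toReal_smul hρ.ennreal_ofReal
    (.of_forall fun _ => ENNReal.ofReal_lt_top)]
  simp [ENNReal.toReal_ofReal (hρ0 _)]

section Euclidean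

variable {n : ℕ}

theorem sum_fderiv_single_mul_fderiv_single (F W : EuclideanSpace ℝ (Fin n) → ℝ)
    (x : EuclideanSpace ℝ (Fin n)) :
    ∑ i, fderiv ℝ F x (EuclideanSpace.single i 1) * fderiv ℝ W x (EuclideanSpace.single i 1)
      = ⟪gradient F x, gradient W x⟫ := by
  rw [← (EuclideanSpace.basisFun (Fin n) ℝ).sum_inner_mul_inner]
  refine Finset.sum_congr rfl fun i _ => ?_
  rw [EuclideanSpace.basisFun_apply, inner_gradient_left, real_inner_comm, inner_gradient_left]

theorem ContDiff.continuous_euclideanLaplacian {W : EuclideanSpace ℝ (Fin n) → ℝ}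
    (hW : ContDiff ℝ 2 W) : Continuous (euclideanLaplacian W) :=
  continuous_finsetSum _ fun _ _ =>
    ((hW.contDiff_fderiv_apply_const (k := 1) _).continuous_fderiv one_ne_zero).clm_apply
      continuous_const

theorem integral_mul_euclideanLaplacian {F W : EuclideanSpace ℝ (Fin n) → ℝ}
    (hF : ContDiff ℝ 1 F) (hFc : HasCompactSupport F) (hW : ContDiff ℝ 2 W) :
    ∫ x, F x * euclideanLaplacian W x = -∫ x, ⟪gradient F x, gradient W x⟫ := by
  have hpartial : ∀ v, ContDiff ℝ 1 (fun y => fderiv ℝ W y v) :=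
    hW.contDiff_fderiv_apply_const (k := 1)
  have hint₁ : ∀ v, Integrable (fun x => fderiv ℝ F x v * fderiv ℝ W x v) := fun v =>
    (((hF.continuous_fderiv one_ne_zero).clm_apply continuous_const).mul
      (hpartial v).continuous).integrable_of_hasCompactSupport (hFc.fderiv_apply ℝ v).mul_right
  have hint₂ : ∀ v, Integrable (fun x => F x * fderiv ℝ (fun y => fderiv ℝ W y v) x v) :=
    fun v => (hF.continuous.mul (((hpartial v).continuous_fderiv one_ne_zero).clm_apply
      continuous_const)).integrable_of_hasCompactSupport hFc.mul_right
  have hibp : ∀ v, ∫ x, F x * fderiv ℝ (fun y => fderiv ℝ W y v) x v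
      = -∫ x, fderiv ℝ F x v * fderiv ℝ W x v := fun v =>
    integral_mul_fderiv_eq_neg_fderiv_mul_of_integrable (hint₁ v) (hint₂ v)
      ((hF.continuous.mul (hpartial v).continuous).integrable_of_hasCompactSupport hFc.mul_right)
      (fun x _ => hF.differentiable one_ne_zero x)
      (fun x _ => (hpartial v).differentiable one_ne_zero x)
  calc ∫ x, F x * euclideanLaplacian W x
      = ∑ i, ∫ x, F x * fderiv ℝ (fun y => fderiv ℝ W y (EuclideanSpace.single i 1)) x
          (EuclideanSpace.single i 1) := by
        rw [← integral_finsetSum _ fun i _ => hint₂ _]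
        simp only [euclideanLaplacian, Finset.mul_sum]
    _ = ∑ i, -∫ x, fderiv ℝ F x (EuclideanSpace.single i 1) *
          fderiv ℝ W x (EuclideanSpace.single i 1) := Finset.sum_congr rfl fun i _ => hibp _
    _ = -∫ x, ⟪gradient F x, gradient W x⟫ := by
        rw [Finset.sum_neg_distrib, ← integral_finsetSum _ fun i _ => hint₁ _]
        simp_rw [sum_fderiv_single_mul_fderiv_single]

/-- `-ΔW + ⟪∇V, ∇W⟫ = -LW`, so this is `-∫ φ LW dμ = ∫ Γ(φ, W) dμ`. -/
theorem integral_mul_neg_generator_eq_integral_inner_gradient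
    {V W φ : EuclideanSpace ℝ (Fin n) → ℝ} (hV : ContDiff ℝ 1 V) (hW : ContDiff ℝ 2 W)
    (hφ : ContDiff ℝ 1 φ) (hφc : HasCompactSupport φ) :
    ∫ x, φ x * (-euclideanLaplacian W x + ⟪gradient V x, gradient W x⟫)
        ∂volume.withDensity (fun x => ENNReal.ofReal (exp (-V x)))
      = ∫ x, ⟪gradient φ x, gradient W x⟫
          ∂volume.withDensity (fun x => ENNReal.ofReal (exp (-V x))) := by
  have hρ : ContDiff ℝ 1 fun x => exp (-V x) := hV.neg.exp
  have hW₁ : ContDiff ℝ 1 W := hW.of_le one_le_two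
  simp only [integral_withDensity_ofReal hρ.continuous.measurable fun x => (exp_pos _).le]
  have hIBP := integral_mul_euclideanLaplacian (hφ.mul hρ) hφc.mul_right hW
  have hint_lap : Integrable fun x => φ x * exp (-V x) * euclideanLaplacian W x :=
    ((hφ.mul hρ).continuous.mul hW.continuous_euclideanLaplacian).integrable_of_hasCompactSupport
      hφc.mul_right.mul_right
  have hint_drift : Integrable fun x => exp (-V x) * φ x * ⟪gradient V x, gradient W x⟫ :=
    ((hρ.continuous.mul hφ.continuous).mul
      (hV.continuous_gradient.inner hW₁.continuous_gradient)
      ).integrable_of_hasCompactSupport hφc.mul_left.mul_right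
  have hint_grad : Integrable fun x => ⟪gradient (fun y => φ y * exp (-V y)) x, gradient W x⟫ :=
    ((hφ.mul hρ).continuous_gradient.inner hW₁.continuous_gradient
      ).integrable_of_hasCompactSupport hφc.mul_right.gradient.inner_left
  calc ∫ x, exp (-V x) * (φ x * (-euclideanLaplacian W x + ⟪gradient V x, gradient W x⟫))
      = -(∫ x, φ x * exp (-V x) * euclideanLaplacian W x)
          + ∫ x, exp (-V x) * φ x * ⟪gradient V x, gradient W x⟫ := by
        rw [← integral_neg, ← integral_add hint_lap.fun_neg hint_drift]
        congr 1 with x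
        ring
    _ = ∫ x, (⟪gradient (fun y => φ y * exp (-V y)) x, gradient W x⟫
          + exp (-V x) * φ x * ⟪gradient V x, gradient W x⟫) := by
        rw [hIBP, neg_neg, integral_add hint_grad hint_drift]
    _ = ∫ x, exp (-V x) * ⟪gradient φ x, gradient W x⟫ := by
        congr 1 with x
        rw [inner_gradient_mul_exp_neg (hφ.differentiable one_ne_zero x)
          (hV.differentiable one_ne_zero x)]
        ring

end Euclidean

theorem lyapunov_ipp_general
    {n : ℕ} (V : EuclideanSpace ℝ (Fin n) → ℝ) (hV : ContDiff ℝ (⊤ : ℕ∞) V)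
    (μ : Measure (EuclideanSpace ℝ (Fin n)))
    (hμ : μ = volume.withDensity fun x => ENNReal.ofReal (Real.exp (-V x)))
    (W : EuclideanSpace ℝ (Fin n) → ℝ) (hW : ContDiff ℝ (⊤ : ℕ∞) W) (hW1 : ∀ x, 1 ≤ W x)
    (f : EuclideanSpace ℝ (Fin n) → ℝ) (hf : ContDiff ℝ (⊤ : ℕ∞) f)
    (hfc : HasCompactSupport f) :
    ∫ x, ((-(euclideanLaplacian W x) + ⟪gradient V x, gradient W x⟫) / W x) * (f x) ^ 2 ∂μ
      ≤ ∫ x, ‖gradient f x‖ ^ 2 ∂μ := by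
  have htop : (2 : WithTop ℕ∞) ≤ (⊤ : ℕ∞) := WithTop.coe_le_coe.2 le_top
  have hV₁ : ContDiff ℝ 1 V := hV.of_le (one_le_two.trans htop)
  have hW₂ : ContDiff ℝ 2 W := hW.of_le htop
  have hW₁ : ContDiff ℝ 1 W := hW₂.of_le one_le_two
  have hf₁ : ContDiff ℝ 1 f := hf.of_le (one_le_two.trans htop)
  have hWne : ∀ x, W x ≠ 0 := fun x => (one_pos.trans_le (hW1 x)).ne'
  have hφ : ContDiff ℝ 1 fun x => f x ^ 2 / W x := (hf₁.pow 2).div hW₁ hWne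
  have hφc : HasCompactSupport fun x => f x ^ 2 / W x :=
    hfc.mono fun x hx hfx => hx (by simp [hfx])
  have : IsLocallyFiniteMeasure μ := hμ ▸ .withDensity_ofReal hV.continuous.neg.rexp
  calc ∫ x, ((-(euclideanLaplacian W x) + ⟪gradient V x, gradient W x⟫) / W x) * (f x) ^ 2 ∂μ
      = ∫ x, f x ^ 2 / W x * (-euclideanLaplacian W x + ⟪gradient V x, gradient W x⟫) ∂μ := by
        congr 1 with x
        ring
    _ = ∫ x, ⟪gradient (fun y => f y ^ 2 / W y) x, gradient W x⟫ ∂μ := by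
        rw [hμ]
        exact integral_mul_neg_generator_eq_integral_inner_gradient hV₁ hW₂ hφ hφc
    _ ≤ ∫ x, ‖gradient f x‖ ^ 2 ∂μ :=
        integral_mono
          ((hφ.continuous_gradient.inner hW₁.continuous_gradient).integrable_of_hasCompactSupport
            hφc.gradient.inner_left)
          ((hf₁.continuous_gradient.norm.pow 2).integrable_of_hasCompactSupport
            (hfc.gradient.mono fun x hx hfx => hx (by simp [hfx])))
          fun x => inner_gradient_sq_div_le (hf₁.differentiable one_ne_zero x)
            (hW₁.differentiable one_ne_zero x) (hWne x)

/-- Let `V : ℝⁿ → ℝ` be smooth, `μ = e^{-V} dx` a probability measure and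
`L g = Δg − ∇V·∇g`.  For every smooth `W ≥ 1` and every smooth compactly supported `f`,
`∫ (−LW/W) f² dμ ≤ ∫ |∇f|² dμ`. -/
theorem lyapunov_ipp
    {n : ℕ} (V : EuclideanSpace ℝ (Fin n) → ℝ) (hV : ContDiff ℝ (⊤ : ℕ∞) V)
    (μ : Measure (EuclideanSpace ℝ (Fin n)))
    (hμ : μ = volume.withDensity fun x => ENNReal.ofReal (Real.exp (-V x)))
    (hprob : IsProbabilityMeasure μ)
    (W : EuclideanSpace ℝ (Fin n) → ℝ) (hW : ContDiff ℝ (⊤ : ℕ∞) W) (hW1 : ∀ x, 1 ≤ W x)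
    (f : EuclideanSpace ℝ (Fin n) → ℝ) (hf : ContDiff ℝ (⊤ : ℕ∞) f)
    (hfc : HasCompactSupport f) :
    ∫ x, ((-(euclideanLaplacian W x) + ⟪gradient V x, gradient W x⟫) / W x) * (f x) ^ 2 ∂μ
      ≤ ∫ x, ‖gradient f x‖ ^ 2 ∂μ :=
  lyapunov_ipp_general V hV μ hμ W hW hW1 f hf hfc
end

section
/- Let dμ = e^{-V(x)} dx be a probability measure on ℝ satisfying a Poincaré inequality with constant C_P (and admitting a sequence (V_n) of C¹ functions with e^{-V_n} → e^{-V} weakly in σ(L¹, L^∞)). Then for every interval (a,b) ⊆ ℝ with μ((a,b)) > 0, denoting by μ_{(a,b)} the normalized restriction of μ to (a,b), one has for every bounded smooth f: Var_{μ_{(a,b)}}(f) ≤ ( 8 C_P / sup_{u ∈ (a,b)} ( μ((−∞, u]) ∧ μ([u, +∞)) ) ) ∫ (f')² dμ_{(a,b)}. In particular, if a ≤ m_μ ≤ b for some median m_μ of μ, then μ_{(a,b)} satisfies a Poincaré inequality with a constant not larger than 16 C_P. -/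
/-
Fix `u ∈ (a, b)`. On `(u, b)` the function `f - f u` is, up to smoothing, the restriction of a
function `h` that vanishes on `(-∞, u]` and is constant on `[b, ∞)`. A function vanishing on a set
of mass `p` satisfies `p ∫ h² ≤ Var h` (Cauchy–Schwarz on the complement), so the Poincaré
inequality gives `μ(-∞, u] ∫_{(u,b)} (f - f u)² dμ ≤ C_P ∫_{(u,b)} f'² dμ`, and symmetrically on
`(a, u)` with `μ[u, ∞)`. Adding the two and using `Var ≤ ∫ (f - f u)²` gives
`min (μ(-∞, u]) (μ[u, ∞)) · Var_{μ_{(a,b)}} f ≤ C_P ∫ f'² dμ_{(a,b)}`, and the supremum over `u`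
yields the first claim, even with `C_P` in place of `8 C_P`. As `μ` has no atoms the left factor is
continuous in `u`, so a median in `[a, b]` makes the supremum at least `1/2`.

The smoothing uses primitives `∫_u^x f' ψ_n` with smooth bumps `ψ_n` increasing to `1` on the
interval, and Poincaré passes from compactly supported functions to bounded ones with bounded
derivative through a cutoff `f(x) χ(x / n)`.
-/

open MeasureTheory Filter Set ProbabilityTheory
open scoped Topology Interval

def SatisfiesPoincare (μ : Measure ℝ) (C : ℝ) : Prop :=
  ∀ f : ℝ → ℝ, ContDiff ℝ (⊤ : ℕ∞) f → HasCompactSupport f →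
    (∫ x, (f x) ^ 2 ∂μ) - (∫ x, f x ∂μ) ^ 2 ≤ C * ∫ x, (deriv f x) ^ 2 ∂μ

lemma sq_integral_le_measureReal_univ_mul {Ω : Type*} [MeasurableSpace Ω] {ν : Measure Ω}
    [IsFiniteMeasure ν] {g : Ω → ℝ} (hg : MemLp g 2 ν) :
    (∫ x, g x ∂ν) ^ 2 ≤ ν.real univ * ∫ x, g x ^ 2 ∂ν := by
  rcases eq_zero_or_neZero ν with rfl | _
  · simp
  have hjensen : (⨍ x, g x ∂ν) ^ 2 ≤ ⨍ x, g x ^ 2 ∂ν :=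
    even_two.convexOn_pow.map_average_le (continuous_pow 2).continuousOn isClosed_univ
      (ae_of_all _ fun _ ↦ mem_univ _) (hg.integrable one_le_two) hg.integrable_sq
  rw [average_eq, average_eq, smul_eq_mul, smul_eq_mul] at hjensen
  have ht : 0 < ν.real univ := measureReal_univ_pos
  calc (∫ x, g x ∂ν) ^ 2 = ν.real univ ^ 2 * ((ν.real univ)⁻¹ * ∫ x, g x ∂ν) ^ 2 := by
        field_simp
    _ ≤ ν.real univ ^ 2 * ((ν.real univ)⁻¹ * ∫ x, g x ^ 2 ∂ν) := by gcongr
    _ = ν.real univ * ∫ x, g x ^ 2 ∂ν := by field_simp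

lemma measureReal_mul_integral_sq_le_of_eqOn_zero {Ω : Type*} [MeasurableSpace Ω]
    {μ : Measure Ω} [IsProbabilityMeasure μ] {s : Set Ω} (hs : MeasurableSet s) {H : Ω → ℝ}
    (hH : MemLp H 2 μ) (hH0 : EqOn H 0 s) :
    μ.real s * ∫ x, H x ^ 2 ∂μ ≤ (∫ x, H x ^ 2 ∂μ) - (∫ x, H x ∂μ) ^ 2 := by
  have hmean : ∫ x, H x ∂μ = ∫ x in sᶜ, H x ∂μ := by
    rw [← integral_add_compl hs (hH.integrable one_le_two),
      setIntegral_eq_zero_of_forall_eq_zero hH0, zero_add]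
  have hCS := sq_integral_le_measureReal_univ_mul (hH.restrict sᶜ)
  have hrestrict : ∫ x in sᶜ, H x ^ 2 ∂μ ≤ ∫ x, H x ^ 2 ∂μ :=
    setIntegral_le_integral hH.integrable_sq (ae_of_all _ fun _ ↦ sq_nonneg _)
  rw [measureReal_restrict_apply_univ, measureReal_compl hs, probReal_univ] at hCS
  rw [hmean]
  nlinarith [measureReal_le_one (μ := μ) (s := s)]

lemma tendsto_integral_of_abs_le_const {α : Type*} [MeasurableSpace α] {μ : Measure α}
    [IsFiniteMeasure μ] {F : ℕ → α → ℝ} {f : α → ℝ} {B : ℝ}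
    (hF : ∀ n, AEStronglyMeasurable (F n) μ) (hB : ∀ n x, |F n x| ≤ B)
    (hlim : ∀ᵐ x ∂μ, Tendsto (F · x) atTop (𝓝 (f x))) :
    Tendsto (fun n ↦ ∫ x, F n x ∂μ) atTop (𝓝 (∫ x, f x ∂μ)) :=
  tendsto_integral_of_dominated_convergence (fun _ ↦ B) hF (integrable_const B)
    (fun n ↦ ae_of_all _ (hB n)) hlim

lemma abs_sq_le_sq_of_abs_le {x B : ℝ} (h : |x| ≤ B) : |x ^ 2| ≤ B ^ 2 := by
  rw [abs_pow]
  exact pow_le_pow_left₀ (abs_nonneg x) h 2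

lemma integral_cond_eq {Ω E : Type*} [MeasurableSpace Ω] [NormedAddCommGroup E]
    [NormedSpace ℝ E] (μ : Measure Ω) (s : Set Ω) (g : Ω → E) :
    ∫ x, g x ∂μ[|s] = (μ.real s)⁻¹ • ∫ x in s, g x ∂μ := by
  rw [ProbabilityTheory.cond, integral_smul_measure, ENNReal.toReal_inv, measureReal_def]

lemma setIntegral_Ioo_add_setIntegral_Ioo {μ : Measure ℝ} [NullSingletonClass μ] {g : ℝ → ℝ}
    {a u b : ℝ} (hau : a ≤ u) (hub : u ≤ b) (h₁ : IntervalIntegrable g μ a u)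
    (h₂ : IntervalIntegrable g μ u b) :
    ∫ x in Ioo a u, g x ∂μ + ∫ x in Ioo u b, g x ∂μ = ∫ x in Ioo a b, g x ∂μ := by
  simp only [← integral_Ioc_eq_integral_Ioo, ← intervalIntegral.integral_of_le hau,
    ← intervalIntegral.integral_of_le hub, ← intervalIntegral.integral_of_le (hau.trans hub)]
  exact intervalIntegral.integral_add_adjacent_intervals h₁ h₂

lemma exists_nonneg_bound_Icc {g : ℝ → ℝ} (hg : Continuous g) (α β : ℝ) :
    ∃ L, 0 ≤ L ∧ ∀ t ∈ Icc α β, |g t| ≤ L := by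
  obtain ⟨L, hL⟩ := isCompact_Icc.exists_bound_of_continuousOn hg.continuousOn
  exact ⟨max L 0, le_max_right _ _, fun t ht ↦ (hL t ht).trans (le_max_left _ _)⟩

lemma contDiff_primitive {g : ℝ → ℝ} (hg : ContDiff ℝ (⊤ : ℕ∞) g) (u : ℝ) :
    ContDiff ℝ (⊤ : ℕ∞) fun x ↦ ∫ t in u..x, g t := by
  refine contDiff_infty_iff_deriv.2
    ⟨fun x ↦ (hg.continuous.integral_hasStrictDerivAt u x).hasDerivAt.differentiableAt, ?_⟩
  rwa [funext (hg.continuous.deriv_integral g u)]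

lemma ProbabilityTheory.continuous_cdf {μ : Measure ℝ} [IsProbabilityMeasure μ]
    [NullSingletonClass μ] : Continuous (cdf μ) := by
  refine continuous_iff_continuousAt.2 fun x ↦ continuousAt_iff_continuous_left'_right'.2
    ⟨?_, ((cdf μ).right_continuous x).mono Ioi_subset_Ici_self⟩
  rw [(monotone_cdf μ).continuousWithinAt_Iio_iff_leftLim_eq]
  have h := (cdf μ).measure_singleton x
  rw [measure_cdf, measure_singleton, eq_comm, ENNReal.ofReal_eq_zero, sub_nonpos] at h
  exact le_antisymm ((monotone_cdf μ).leftLim_le le_rfl) h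

lemma Continuous.le_csSup_image_Ioo {F : ℝ → ℝ} (hF : Continuous F) {a b m : ℝ} (hab : a < b)
    (hbdd : BddAbove (F '' Ioo a b)) (hm : m ∈ Icc a b) : F m ≤ sSup (F '' Ioo a b) := by
  have hm' : F m ∈ closure (F '' Ioo a b) :=
    mem_closure_image hF.continuousAt (by rwa [closure_Ioo hab.ne])
  exact closure_minimal (fun _ hy ↦ le_csSup hbdd hy) isClosed_Iic hm'

lemma exists_cutoff_seq : ∃ (χ : ℕ → ℝ → ℝ) (K : ℝ), (∀ n, ContDiff ℝ (⊤ : ℕ∞) (χ n)) ∧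
    (∀ n, HasCompactSupport (χ n)) ∧ (∀ n x, |χ n x| ≤ 1) ∧ (∀ n x, |deriv (χ n) x| ≤ K) ∧
    ∀ x, ∀ᶠ n in atTop, χ n =ᶠ[𝓝 x] 1 := by
  obtain ⟨χ₀, hχ₀⟩ : ∃ χ₀ : ContDiffBump (0 : ℝ), χ₀.rIn = 1 := ⟨⟨1, 2, one_pos, one_lt_two⟩, rfl⟩
  obtain ⟨K, hK⟩ := ((χ₀.contDiff (n := 1)).continuous_deriv le_rfl)
    |>.bounded_above_of_compact_support χ₀.hasCompactSupport.deriv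
  have hc : ∀ n : ℕ, 0 < ((n : ℝ) + 1)⁻¹ := fun n ↦ by positivity
  refine ⟨fun n x ↦ χ₀ (((n : ℝ) + 1)⁻¹ * x), K, fun n ↦ ?_, fun n ↦ ?_, fun n x ↦ ?_,
    fun n x ↦ ?_, fun x ↦ ?_⟩
  · exact χ₀.contDiff.comp (by fun_prop)
  · simpa only [smul_eq_mul] using χ₀.hasCompactSupport.comp_smul (hc n).ne'
  · exact abs_le.2 ⟨by linarith [χ₀.nonneg (x := ((n : ℝ) + 1)⁻¹ * x)], χ₀.le_one⟩
  · rw [deriv_comp_mul_left, smul_eq_mul, abs_mul, abs_of_pos (hc n)]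
    have hc1 : ((n : ℝ) + 1)⁻¹ ≤ 1 := inv_le_one_of_one_le₀ (by simp)
    have hK0 : 0 ≤ K := (norm_nonneg _).trans (hK 0)
    calc ((n : ℝ) + 1)⁻¹ * |deriv χ₀ (((n : ℝ) + 1)⁻¹ * x)| ≤ 1 * K :=
          mul_le_mul hc1 (hK _) (abs_nonneg _) zero_le_one
      _ = K := one_mul K
  · obtain ⟨N, hN⟩ := exists_nat_gt |x|
    filter_upwards [eventually_ge_atTop N] with n hn
    filter_upwards [Metric.isOpen_ball.mem_nhds (show x ∈ Metric.ball 0 ((n : ℝ) + 1) by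
      rw [mem_ball_zero_iff, Real.norm_eq_abs]
      linarith [(Nat.cast_le (α := ℝ)).2 hn])] with y hy
    refine χ₀.one_of_mem_closedBall ?_
    rw [hχ₀, mem_closedBall_zero_iff, Real.norm_eq_abs, abs_mul, abs_of_pos (hc n)]
    rw [mem_ball_zero_iff, Real.norm_eq_abs] at hy
    calc ((n : ℝ) + 1)⁻¹ * |y| ≤ ((n : ℝ) + 1)⁻¹ * ((n : ℝ) + 1) := by gcongr
      _ = 1 := inv_mul_cancel₀ (by positivity)

theorem SatisfiesPoincare.le_of_bounded {μ : Measure ℝ} [IsFiniteMeasure μ] {C : ℝ}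
    (hP : SatisfiesPoincare μ C) {f : ℝ → ℝ} (hf : ContDiff ℝ (⊤ : ℕ∞) f) {M M' : ℝ}
    (hM : ∀ x, |f x| ≤ M) (hM' : ∀ x, |deriv f x| ≤ M') :
    (∫ x, f x ^ 2 ∂μ) - (∫ x, f x ∂μ) ^ 2 ≤ C * ∫ x, deriv f x ^ 2 ∂μ := by
  obtain ⟨χ, K, hχ, hχc, hχ1, hχK, hχ_ev⟩ := exists_cutoff_seq
  set F : ℕ → ℝ → ℝ := fun n x ↦ f x * χ n x with hF_def
  have hF : ∀ n, ContDiff ℝ (⊤ : ℕ∞) (F n) := fun n ↦ hf.mul (hχ n)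
  have hF_ev : ∀ x, ∀ᶠ n in atTop, F n =ᶠ[𝓝 x] f := fun x ↦
    (hχ_ev x).mono fun n hn ↦ hn.mono fun y hy ↦ by simp [F, hy]
  have hF_lim : ∀ x, Tendsto (F · x) atTop (𝓝 (f x)) := fun x ↦
    tendsto_const_nhds.congr' <| (hF_ev x).mono fun n hn ↦ hn.eq_of_nhds.symm
  have hF'_lim : ∀ x, Tendsto (fun n ↦ deriv (F n) x) atTop (𝓝 (deriv f x)) := fun x ↦
    tendsto_const_nhds.congr' <| (hF_ev x).mono fun n hn ↦ hn.deriv_eq.symm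
  have hM0 : 0 ≤ M := (abs_nonneg _).trans (hM 0)
  have hF_bd : ∀ n x, |F n x| ≤ M := fun n x ↦ by
    simpa [F, abs_mul] using mul_le_mul (hM x) (hχ1 n x) (abs_nonneg _) hM0
  have hF'_bd : ∀ n x, |deriv (F n) x| ≤ M' * 1 + M * K := fun n x ↦ by
    rw [hF_def, deriv_fun_mul (hf.differentiable (by simp) x) ((hχ n).differentiable (by simp) x)]
    refine (abs_add_le _ _).trans (add_le_add ?_ ?_) <;> rw [abs_mul]
    · exact mul_le_mul (hM' x) (hχ1 n x) (abs_nonneg _) ((abs_nonneg _).trans (hM' x))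
    · exact mul_le_mul (hM x) (hχK n x) (abs_nonneg _) hM0
  refine le_of_tendsto_of_tendsto' (b := atTop) ?_ ?_ fun n ↦ hP (F n) (hF n) (hχc n).mul_left
  · refine Tendsto.sub ?_ (Tendsto.pow ?_ 2)
    · exact tendsto_integral_of_abs_le_const
        (fun n ↦ ((hF n).continuous.pow 2).aestronglyMeasurable)
        (fun n x ↦ abs_sq_le_sq_of_abs_le (hF_bd n x))
        (ae_of_all _ fun x ↦ (hF_lim x).pow 2)
    · exact tendsto_integral_of_abs_le_const (fun n ↦ (hF n).continuous.aestronglyMeasurable) hF_bd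
        (ae_of_all _ hF_lim)
  · refine Tendsto.const_mul C ?_
    exact tendsto_integral_of_abs_le_const
      (fun n ↦ (((hF n).continuous_deriv (by simp)).pow 2).aestronglyMeasurable)
      (fun n x ↦ abs_sq_le_sq_of_abs_le (hF'_bd n x))
      (ae_of_all _ fun x ↦ (hF'_lim x).pow 2)

structure IsBumpSeq (α β : ℝ) (ψ : ℕ → ℝ → ℝ) : Prop where
  contDiff : ∀ n, ContDiff ℝ (⊤ : ℕ∞) (ψ n)
  abs_le_one : ∀ n x, |ψ n x| ≤ 1
  eq_zero : ∀ n, ∀ x ∉ Ioo α β, ψ n x = 0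
  eventually_eq_one : ∀ x ∈ Ioo α β, ∀ᶠ n in atTop, ψ n x = 1

lemma exists_isBumpSeq {α β : ℝ} (h : α < β) : ∃ ψ, IsBumpSeq α β ψ := by
  obtain ⟨c, r, hr, hball⟩ : ∃ c r, 0 < r ∧ Metric.ball c r = Ioo α β :=
    ⟨(α + β) / 2, (β - α) / 2, by linarith, by rw [Real.ball_eq_Ioo]; congr 1 <;> ring⟩
  obtain ⟨ρ, -, hρ, hρ_lim⟩ := exists_seq_strictMono_tendsto' hr
  let φ : ℕ → ContDiffBump c := fun n ↦ ⟨ρ n, r, (hρ n).1, (hρ n).2⟩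
  refine ⟨fun n ↦ φ n, fun n ↦ (φ n).contDiff, fun n x ↦ ?_, fun n x hx ↦ ?_, fun x hx ↦ ?_⟩
  · exact abs_le.2 ⟨by linarith [(φ n).nonneg (x := x)], (φ n).le_one⟩
  · rwa [← Function.notMem_support, (φ n).support_eq, show (φ n).rOut = r from rfl, hball]
  · rw [← hball, Metric.mem_ball] at hx
    filter_upwards [hρ_lim.eventually (lt_mem_nhds hx)] with n hn
    exact (φ n).one_of_mem_closedBall hn.le

namespace IsBumpSeq

variable {α β : ℝ} {ψ : ℕ → ℝ → ℝ}

lemma tendsto_mul (hψ : IsBumpSeq α β ψ) (g : ℝ → ℝ) (x : ℝ) :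
    Tendsto (fun n ↦ g x * ψ n x) atTop (𝓝 ((Ioo α β).indicator g x)) := by
  by_cases hx : x ∈ Ioo α β
  · rw [indicator_of_mem hx]
    exact tendsto_const_nhds.congr' <| (hψ.eventually_eq_one x hx).mono fun n hn ↦ by simp [hn]
  · simp [indicator_of_notMem hx, hψ.eq_zero _ x hx]

lemma abs_mul_le (hψ : IsBumpSeq α β ψ) {g : ℝ → ℝ} {L : ℝ} (hL0 : 0 ≤ L)
    (hL : ∀ t ∈ Icc α β, |g t| ≤ L) (n : ℕ) (t : ℝ) : |g t * ψ n t| ≤ L := by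
  by_cases ht : t ∈ Ioo α β
  · calc |g t * ψ n t| = |g t| * |ψ n t| := abs_mul _ _
      _ ≤ L * 1 := mul_le_mul (hL t (Ioo_subset_Icc_self ht)) (hψ.abs_le_one n t) (abs_nonneg _) hL0
      _ = L := mul_one L
  · simpa [hψ.eq_zero n t ht] using hL0

lemma tendsto_intervalIntegral_mul (hψ : IsBumpSeq α β ψ) {g : ℝ → ℝ} (hg : Continuous g)
    {u x : ℝ} (hu : u ∈ Icc α β) (hx : x ∈ Icc α β) :
    Tendsto (fun n ↦ ∫ t in u..x, g t * ψ n t) atTop (𝓝 (∫ t in u..x, g t)) := by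
  obtain ⟨L, hL0, hL⟩ := exists_nonneg_bound_Icc hg α β
  refine intervalIntegral.tendsto_integral_filter_of_dominated_convergence (fun _ ↦ L)
    (Eventually.of_forall fun n ↦ (hg.mul (hψ.contDiff n).continuous).aestronglyMeasurable)
    (Eventually.of_forall fun n ↦ ae_of_all _ fun t _ ↦ hψ.abs_mul_le hL0 hL n t)
    intervalIntegrable_const ?_
  filter_upwards [Ioo_ae_eq_Icc.symm.le] with t hIoo ht
  have hmem : t ∈ Ioo α β := hIoo (uIcc_subset_Icc hu hx (uIoc_subset_uIcc ht))
  simpa [indicator_of_mem hmem] using hψ.tendsto_mul g t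

lemma tendsto_integral_sq_mul {μ : Measure ℝ} [IsFiniteMeasure μ] (hψ : IsBumpSeq α β ψ)
    {g : ℝ → ℝ} (hg : Continuous g) :
    Tendsto (fun n ↦ ∫ t, (g t * ψ n t) ^ 2 ∂μ) atTop (𝓝 (∫ t in Ioo α β, g t ^ 2 ∂μ)) := by
  obtain ⟨L, hL0, hL⟩ := exists_nonneg_bound_Icc hg α β
  rw [← integral_indicator measurableSet_Ioo]
  refine tendsto_integral_of_abs_le_const (B := L ^ 2)
    (fun n ↦ ((hg.mul (hψ.contDiff n).continuous).pow 2).aestronglyMeasurable)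
    (fun n t ↦ ?_) (ae_of_all _ fun t ↦ ?_)
  · exact abs_sq_le_sq_of_abs_le (hψ.abs_mul_le hL0 hL n t)
  · convert (hψ.tendsto_mul g t).pow 2 using 2
    by_cases ht : t ∈ Ioo α β <;> simp [ht]

lemma abs_intervalIntegral_mul_le (hψ : IsBumpSeq α β ψ) (hαβ : α ≤ β) {g : ℝ → ℝ} {L : ℝ}
    (hL0 : 0 ≤ L) (hL : ∀ t ∈ Icc α β, |g t| ≤ L) (n : ℕ) (u x : ℝ) :
    |∫ t in u..x, g t * ψ n t| ≤ L * (β - α) := by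
  have h_ind : (Ioo α β).indicator (fun t ↦ g t * ψ n t) = fun t ↦ g t * ψ n t :=
    indicator_eq_self.2 fun t ht ↦ by_contra fun h ↦ ht (by simp [hψ.eq_zero n t h])
  have hfin : volume (Ι u x ∩ Ioo α β) < ⊤ :=
    (measure_mono inter_subset_right).trans_lt measure_Ioo_lt_top
  calc |∫ t in u..x, g t * ψ n t| = ‖∫ t in Ι u x ∩ Ioo α β, g t * ψ n t‖ := by
        rw [← Real.norm_eq_abs, intervalIntegral.norm_integral_eq_norm_integral_uIoc,
          ← setIntegral_indicator measurableSet_Ioo, h_ind]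
    _ ≤ L * volume.real (Ι u x ∩ Ioo α β) :=
        norm_setIntegral_le_of_norm_le_const hfin fun t _ ↦ hψ.abs_mul_le hL0 hL n t
    _ ≤ L * volume.real (Ioo α β) := by
        gcongr
        exacts [measure_Ioo_lt_top.ne, inter_subset_right]
    _ = L * (β - α) := by rw [Real.volume_real_Ioo_of_le hαβ]

end IsBumpSeq

theorem SatisfiesPoincare.measureReal_mul_setIntegral_sq_sub_le {μ : Measure ℝ}
    [IsProbabilityMeasure μ] {C : ℝ} (hP : SatisfiesPoincare μ C) {f : ℝ → ℝ}
    (hf : ContDiff ℝ (⊤ : ℕ∞) f) {α β u : ℝ} (hu : u ∈ Icc α β) {s : Set ℝ}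
    (hs : MeasurableSet s) (hsu : ∀ x ∈ s, Disjoint (Ι u x) (Ioo α β)) :
    μ.real s * ∫ x in Ioo α β, (f x - f u) ^ 2 ∂μ ≤ C * ∫ x in Ioo α β, deriv f x ^ 2 ∂μ := by
  rcases le_or_gt β α with hβα | hαβ
  · simp [Ioo_eq_empty hβα.not_gt]
  obtain ⟨ψ, hψ⟩ := exists_isBumpSeq hαβ
  have hf' : ContDiff ℝ (⊤ : ℕ∞) (deriv f) := (contDiff_infty_iff_deriv.1 hf).2
  obtain ⟨L, hL0, hL⟩ := exists_nonneg_bound_Icc hf'.continuous α β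
  -- As `ψ n` vanishes off `(α, β)`, the smooth primitive `H n` of `f' ψ n` vanishes on `s`.
  set g : ℕ → ℝ → ℝ := fun n t ↦ deriv f t * ψ n t
  set H : ℕ → ℝ → ℝ := fun n x ↦ ∫ t in u..x, g n t
  have hg : ∀ n, ContDiff ℝ (⊤ : ℕ∞) (g n) := fun n ↦ hf'.mul (hψ.contDiff n)
  have hH_deriv : ∀ n, deriv (H n) = g n := fun n ↦
    funext ((hg n).continuous.deriv_integral (g n) u)
  have hH_bd : ∀ n x, |H n x| ≤ L * (β - α) := fun n ↦
    hψ.abs_intervalIntegral_mul_le hαβ.le hL0 hL n u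
  have hH_memLp : ∀ n, MemLp (H n) 2 μ := fun n ↦
    MemLp.of_bound (contDiff_primitive (hg n) u).continuous.aestronglyMeasurable _
      (ae_of_all _ (hH_bd n))
  have hH0 : ∀ n, EqOn (H n) 0 s := fun n x hx ↦ intervalIntegral.integral_zero_ae
    (ae_of_all _ fun t ht ↦ by simp [g, hψ.eq_zero n t (disjoint_left.1 (hsu x hx) ht)])
  have hstep : ∀ n, μ.real s * ∫ x in Ioo α β, H n x ^ 2 ∂μ ≤ C * ∫ x, g n x ^ 2 ∂μ := fun n ↦
    calc μ.real s * ∫ x in Ioo α β, H n x ^ 2 ∂μ ≤ μ.real s * ∫ x, H n x ^ 2 ∂μ :=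
          mul_le_mul_of_nonneg_left (setIntegral_le_integral (hH_memLp n).integrable_sq
            (ae_of_all _ fun _ ↦ sq_nonneg _)) measureReal_nonneg
      _ ≤ (∫ x, H n x ^ 2 ∂μ) - (∫ x, H n x ∂μ) ^ 2 :=
          measureReal_mul_integral_sq_le_of_eqOn_zero hs (hH_memLp n) (hH0 n)
      _ ≤ C * ∫ x, deriv (H n) x ^ 2 ∂μ :=
          hP.le_of_bounded (contDiff_primitive (hg n) u) (hH_bd n)
            (by simpa only [hH_deriv n] using hψ.abs_mul_le hL0 hL n)
      _ = C * ∫ x, g n x ^ 2 ∂μ := by rw [hH_deriv n]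
  refine le_of_tendsto_of_tendsto' (b := atTop) (Tendsto.const_mul _ ?_)
    ((hψ.tendsto_integral_sq_mul hf'.continuous).const_mul C) hstep
  refine tendsto_integral_of_abs_le_const
    (fun n ↦ ((contDiff_primitive (hg n) u).continuous.pow 2).aestronglyMeasurable)
    (fun n x ↦ abs_sq_le_sq_of_abs_le (hH_bd n x))
    ((ae_restrict_iff' measurableSet_Ioo).2 (ae_of_all _ fun x hx ↦ ?_))
  have hlim := hψ.tendsto_intervalIntegral_mul hf'.continuous hu (Ioo_subset_Icc_self hx)
  rw [intervalIntegral.integral_deriv_eq_sub (fun y _ ↦ hf.differentiable (by simp) y)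
    (hf'.continuous.intervalIntegrable _ _)] at hlim
  exact hlim.pow 2

def tukeyDepth (μ : Measure ℝ) (u : ℝ) : ℝ := min (μ.real (Iic u)) (μ.real (Ici u))

lemma tukeyDepth_nonneg (μ : Measure ℝ) (u : ℝ) : 0 ≤ tukeyDepth μ u :=
  le_min measureReal_nonneg measureReal_nonneg

lemma tukeyDepth_eq_min_cdf (μ : Measure ℝ) [IsProbabilityMeasure μ] [NullSingletonClass μ]
    (u : ℝ) : tukeyDepth μ u = min (cdf μ u) (1 - cdf μ u) := by
  rw [tukeyDepth, cdf_eq_real, ← probReal_compl_eq_one_sub measurableSet_Iic, compl_Iic,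
    measureReal_congr Ioi_ae_eq_Ici]

lemma continuous_tukeyDepth (μ : Measure ℝ) [IsProbabilityMeasure μ] [NullSingletonClass μ] :
    Continuous (tukeyDepth μ) := by
  rw [funext (tukeyDepth_eq_min_cdf μ)]
  exact continuous_cdf.min (continuous_const.sub continuous_cdf)

lemma exists_tukeyDepth_pos {μ : Measure ℝ} [IsProbabilityMeasure μ] [NullSingletonClass μ]
    {a b : ℝ} (hab : μ (Ioo a b) ≠ 0) : ∃ u ∈ Ioo a b, 0 < tukeyDepth μ u := by
  have hab' : a < b := nonempty_Ioo.1 (nonempty_of_measure_ne_zero hab)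
  have hcdf : cdf μ a < cdf μ b := by
    have h := (cdf μ).measure_Ioc a b
    rw [measure_cdf] at h
    exact sub_pos.1 (ENNReal.ofReal_pos.1 (h ▸ (pos_iff_ne_zero.2 hab).trans_le
      (measure_mono Ioo_subset_Ioc_self)))
  obtain ⟨u, hu, hcdf_u⟩ := intermediate_value_Ioo hab'.le continuous_cdf.continuousOn
    (show (cdf μ a + cdf μ b) / 2 ∈ Ioo (cdf μ a) (cdf μ b) from ⟨by linarith, by linarith⟩)
  refine ⟨u, hu, ?_⟩
  rw [tukeyDepth_eq_min_cdf, hcdf_u]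
  exact lt_min (by linarith [cdf_nonneg μ a]) (by linarith [cdf_le_one μ b])

theorem SatisfiesPoincare.tukeyDepth_mul_setIntegral_sq_sub_le {μ : Measure ℝ}
    [IsProbabilityMeasure μ] [NullSingletonClass μ] {C : ℝ} (hP : SatisfiesPoincare μ C)
    {f : ℝ → ℝ} (hf : ContDiff ℝ (⊤ : ℕ∞) f) {a b u : ℝ} (hu : u ∈ Ioo a b) :
    tukeyDepth μ u * ∫ x in Ioo a b, (f x - f u) ^ 2 ∂μ ≤
      C * ∫ x in Ioo a b, deriv f x ^ 2 ∂μ := by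
  have hleft := hP.measureReal_mul_setIntegral_sq_sub_le hf (α := a) (β := u)
    ⟨hu.1.le, le_rfl⟩ measurableSet_Ici fun x hx ↦ by
      rw [uIoc_of_le hx]
      exact disjoint_left.2 fun t ht ht' ↦ ht.1.not_gt ht'.2
  have hright := hP.measureReal_mul_setIntegral_sq_sub_le hf (α := u) (β := b)
    ⟨le_rfl, hu.2.le⟩ measurableSet_Iic fun x hx ↦ by
      rw [uIoc_of_ge hx]
      exact disjoint_left.2 fun t ht ht' ↦ ht.2.not_gt ht'.1
  have hf' : Continuous (deriv f) := hf.continuous_deriv (by simp)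
  have hsplit : ∀ g : ℝ → ℝ, Continuous g →
      ∫ x in Ioo a u, g x ∂μ + ∫ x in Ioo u b, g x ∂μ = ∫ x in Ioo a b, g x ∂μ := fun _ hg ↦
    setIntegral_Ioo_add_setIntegral_Ioo hu.1.le hu.2.le (hg.intervalIntegrable _ _)
      (hg.intervalIntegrable _ _)
  have hsq_nonneg : ∀ s, 0 ≤ ∫ x in s, (f x - f u) ^ 2 ∂μ := fun _ ↦
    integral_nonneg fun _ ↦ sq_nonneg _
  rw [← hsplit (fun x ↦ (f x - f u) ^ 2) (by fun_prop),
    ← hsplit (fun x ↦ deriv f x ^ 2) (hf'.pow 2), mul_add, mul_add]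
  exact add_le_add
    ((mul_le_mul_of_nonneg_right (min_le_right _ _) (hsq_nonneg _)).trans hleft)
    ((mul_le_mul_of_nonneg_right (min_le_left _ _) (hsq_nonneg _)).trans hright)

theorem SatisfiesPoincare.tukeyDepth_mul_variance_cond_le {μ : Measure ℝ}
    [IsProbabilityMeasure μ] [NullSingletonClass μ] {C : ℝ} (hP : SatisfiesPoincare μ C)
    {f : ℝ → ℝ} (hf : ContDiff ℝ (⊤ : ℕ∞) f) {a b u : ℝ} (hu : u ∈ Ioo a b) :
    tukeyDepth μ u * variance f μ[|Ioo a b] ≤ C * ∫ x, deriv f x ^ 2 ∂μ[|Ioo a b] := by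
  rcases eq_or_ne (μ (Ioo a b)) 0 with h0 | h0
  · simp [cond_eq_zero_of_meas_eq_zero h0]
  have := cond_isProbabilityMeasure (μ := μ) h0
  have hvar : variance f μ[|Ioo a b] ≤ ∫ x, (f x - f u) ^ 2 ∂μ[|Ioo a b] := by
    rw [← variance_sub_const hf.continuous.aestronglyMeasurable (f u)]
    exact variance_le_expectation_sq (hf.continuous.sub continuous_const).aestronglyMeasurable
  rw [integral_cond_eq, smul_eq_mul] at hvar ⊢
  have hz : 0 ≤ (μ.real (Ioo a b))⁻¹ := inv_nonneg.2 measureReal_nonneg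
  calc tukeyDepth μ u * variance f μ[|Ioo a b]
      ≤ tukeyDepth μ u * ((μ.real (Ioo a b))⁻¹ * ∫ x in Ioo a b, (f x - f u) ^ 2 ∂μ) :=
        mul_le_mul_of_nonneg_left hvar (tukeyDepth_nonneg μ u)
    _ = (μ.real (Ioo a b))⁻¹ * (tukeyDepth μ u * ∫ x in Ioo a b, (f x - f u) ^ 2 ∂μ) := by
        ring
    _ ≤ (μ.real (Ioo a b))⁻¹ * (C * ∫ x in Ioo a b, deriv f x ^ 2 ∂μ) :=
        mul_le_mul_of_nonneg_left (hP.tukeyDepth_mul_setIntegral_sq_sub_le hf hu) hz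
    _ = C * ((μ.real (Ioo a b))⁻¹ * ∫ x in Ioo a b, deriv f x ^ 2 ∂μ) := by ring

theorem SatisfiesPoincare.sSup_tukeyDepth_mul_variance_cond_le {μ : Measure ℝ}
    [IsProbabilityMeasure μ] [NullSingletonClass μ] {C : ℝ} (hP : SatisfiesPoincare μ C)
    {f : ℝ → ℝ} (hf : ContDiff ℝ (⊤ : ℕ∞) f) {a b : ℝ} (hab : a < b) :
    sSup (tukeyDepth μ '' Ioo a b) * variance f μ[|Ioo a b] ≤
      C * ∫ x, deriv f x ^ 2 ∂μ[|Ioo a b] := by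
  have hvar := variance_nonneg f μ[|Ioo a b]
  have hW : 0 ≤ C * ∫ x, deriv f x ^ 2 ∂μ[|Ioo a b] :=
    (mul_nonneg (tukeyDepth_nonneg μ _) hvar).trans
      (hP.tukeyDepth_mul_variance_cond_le hf (u := (a + b) / 2) ⟨by linarith, by linarith⟩)
  rw [mul_comm, ← smul_eq_mul, ← Real.sSup_smul_of_nonneg hvar]
  refine Real.sSup_le ?_ hW
  rintro _ ⟨_, ⟨u, hu, rfl⟩, rfl⟩
  simp only [smul_eq_mul]
  rw [mul_comm]
  exact hP.tukeyDepth_mul_variance_cond_le hf hu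

theorem restricted_poincare_inequality_general
    (V : ℝ → ℝ)
    (μ : Measure ℝ)
    (hμ : μ = volume.withDensity fun x => ENNReal.ofReal (Real.exp (-V x)))
    (hprob : IsProbabilityMeasure μ) (CP : ℝ)
    (hPoinc : ∀ f : ℝ → ℝ, ContDiff ℝ (⊤ : ℕ∞) f → HasCompactSupport f →
      (∫ x, (f x) ^ 2 ∂μ) - (∫ x, f x ∂μ) ^ 2 ≤ CP * ∫ x, (deriv f x) ^ 2 ∂μ)
    (a b : ℝ) (hab : 0 < μ (Set.Ioo a b))
    (μab : Measure ℝ) (hμab : μab = (μ (Set.Ioo a b))⁻¹ • μ.restrict (Set.Ioo a b)) :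
    (∀ f : ℝ → ℝ, ContDiff ℝ (⊤ : ℕ∞) f → (∃ M, ∀ x, |f x| ≤ M) →
      (∫ x, (f x) ^ 2 ∂μab) - (∫ x, f x ∂μab) ^ 2 ≤
        (8 * CP /
            sSup ((fun u => min (μ (Set.Iic u)).toReal (μ (Set.Ici u)).toReal) ''
              Set.Ioo a b)) *
          ∫ x, (deriv f x) ^ 2 ∂μab) ∧
    (∀ m : ℝ, a ≤ m → m ≤ b →
      (1 : ℝ) / 2 ≤ (μ (Set.Iic m)).toReal → (1 : ℝ) / 2 ≤ (μ (Set.Ici m)).toReal →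
      ∀ f : ℝ → ℝ, ContDiff ℝ (⊤ : ℕ∞) f → (∃ M, ∀ x, |f x| ≤ M) →
        (∫ x, (f x) ^ 2 ∂μab) - (∫ x, f x ∂μab) ^ 2 ≤
          16 * CP * ∫ x, (deriv f x) ^ 2 ∂μab) := by
  have : NullSingletonClass μ := hμ ▸ inferInstance
  have hcond : μab = μ[|Ioo a b] := hμab
  subst hcond
  have := cond_isProbabilityMeasure (μ := μ) hab.ne'
  have hS : (fun u => min (μ (Iic u)).toReal (μ (Ici u)).toReal) = tukeyDepth μ := rfl
  rw [hS]
  have hab' : a < b := nonempty_Ioo.1 (nonempty_of_measure_ne_zero hab.ne')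
  have hbdd : BddAbove (tukeyDepth μ '' Ioo a b) :=
    ⟨1, by rintro _ ⟨u, -, rfl⟩; exact (min_le_left _ _).trans measureReal_le_one⟩
  obtain ⟨u₀, hu₀, hpos⟩ := exists_tukeyDepth_pos hab.ne'
  have hD : 0 < sSup (tukeyDepth μ '' Ioo a b) := hpos.trans_le (le_csSup hbdd ⟨u₀, hu₀, rfl⟩)
  have hvar : ∀ f : ℝ → ℝ, ContDiff ℝ (⊤ : ℕ∞) f → (∃ M, ∀ x, |f x| ≤ M) →
      (∫ x, f x ^ 2 ∂μ[|Ioo a b]) - (∫ x, f x ∂μ[|Ioo a b]) ^ 2 = variance f μ[|Ioo a b] :=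
    fun f hf ⟨M, hM⟩ ↦ (variance_eq_sub
      (MemLp.of_bound hf.continuous.aestronglyMeasurable M (ae_of_all _ hM))).symm
  have hkey := fun f (hf : ContDiff ℝ (⊤ : ℕ∞) f) ↦
    (show SatisfiesPoincare μ CP from hPoinc).sSup_tukeyDepth_mul_variance_cond_le hf hab'
  refine ⟨fun f hf hfb ↦ ?_, fun m ham hmb hm₁ hm₂ f hf hfb ↦ ?_⟩
  · rw [hvar f hf hfb, div_mul_eq_mul_div, le_div_iff₀ hD]
    nlinarith [hkey f hf, mul_nonneg hD.le (variance_nonneg f μ[|Ioo a b])]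
  · have h_half : 1 / 2 ≤ sSup (tukeyDepth μ '' Ioo a b) := (le_min hm₁ hm₂).trans
      ((continuous_tukeyDepth μ).le_csSup_image_Ioo hab' hbdd ⟨ham, hmb⟩)
    rw [hvar f hf hfb]
    nlinarith [hkey f hf, variance_nonneg f μ[|Ioo a b],
      mul_le_mul_of_nonneg_right h_half (variance_nonneg f μ[|Ioo a b])]

/-- Let `μ = e^{-V} dx` be a probability measure on `ℝ` satisfying a
Poincaré inequality with constant `C_P` (with `C¹` approximations `V_n` of the potential).
For an interval `(a,b)` with `μ((a,b)) > 0`, the normalized restriction `μ_{(a,b)}` satisfies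
`Var_{μ_{(a,b)}}(f) ≤ (8 C_P / sup_{u∈(a,b)} (μ((−∞,u]) ∧ μ([u,∞)))) ∫ (f')² dμ_{(a,b)}`
for every bounded smooth `f`; in particular if `(a,b)` contains a median of `μ`, then
`μ_{(a,b)}` satisfies a Poincaré inequality with constant at most `16 C_P`. -/
theorem restricted_poincare_inequality
    (V : ℝ → ℝ) (hVm : Measurable V)
    (μ : Measure ℝ)
    (hμ : μ = volume.withDensity fun x => ENNReal.ofReal (Real.exp (-V x)))
    (hprob : IsProbabilityMeasure μ) (CP : ℝ)
    (hPoinc : ∀ f : ℝ → ℝ, ContDiff ℝ (⊤ : ℕ∞) f → HasCompactSupport f →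
      (∫ x, (f x) ^ 2 ∂μ) - (∫ x, f x ∂μ) ^ 2 ≤ CP * ∫ x, (deriv f x) ^ 2 ∂μ)
    (Vn : ℕ → ℝ → ℝ) (hVn : ∀ k, ContDiff ℝ 1 (Vn k))
    (hconv : ∀ g : ℝ → ℝ, Measurable g → (∃ M, ∀ x, |g x| ≤ M) →
      Tendsto (fun k => ∫ x, g x * Real.exp (-(Vn k x))) atTop
        (𝓝 (∫ x, g x * Real.exp (-V x))))
    (a b : ℝ) (hab : 0 < μ (Set.Ioo a b))
    (μab : Measure ℝ) (hμab : μab = (μ (Set.Ioo a b))⁻¹ • μ.restrict (Set.Ioo a b)) :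
    (∀ f : ℝ → ℝ, ContDiff ℝ (⊤ : ℕ∞) f → (∃ M, ∀ x, |f x| ≤ M) →
      (∫ x, (f x) ^ 2 ∂μab) - (∫ x, f x ∂μab) ^ 2 ≤
        (8 * CP /
            sSup ((fun u => min (μ (Set.Iic u)).toReal (μ (Set.Ici u)).toReal) ''
              Set.Ioo a b)) *
          ∫ x, (deriv f x) ^ 2 ∂μab) ∧
    (∀ m : ℝ, a ≤ m → m ≤ b →
      (1 : ℝ) / 2 ≤ (μ (Set.Iic m)).toReal → (1 : ℝ) / 2 ≤ (μ (Set.Ici m)).toReal →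
      ∀ f : ℝ → ℝ, ContDiff ℝ (⊤ : ℕ∞) f → (∃ M, ∀ x, |f x| ≤ M) →
        (∫ x, (f x) ^ 2 ∂μab) - (∫ x, f x ∂μab) ^ 2 ≤
          16 * CP * ∫ x, (deriv f x) ^ 2 ∂μab) :=
  restricted_poincare_inequality_general V μ hμ hprob CP hPoinc a b hab μab hμab
end

section
/- Let μ be a probability measure on ℝⁿ, let w : ℝⁿ → [0,1] be measurable with ∫ w dμ > 0, and let C ≥ 0 be such that the weighted Poincaré inequality inf_{a ∈ ℝ} ∫ w (f − a)² dμ ≤ C ∫ |∇f|² dμ holds for every bounded smooth f : ℝⁿ → ℝ. Then for every u > 0 and every bounded smooth f, Var_μ(f) ≤ (C/u) ∫ |∇f|² dμ + μ({w < u}) · Osc(f)², where Osc(f) = sup f − inf f. -/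
/-!
Clamp the centring constant `a` to `[inf f, sup f]`; this only brings it closer to every value
of `f`. Then `Var f ≤ ∫ (f - a')²`, and pointwise `(f - a')² ≤ w (f - a)² / u` where `w ≥ u`,
while `(f - a')² ≤ Osc(f)²` where `w < u`. Integrating and taking the infimum over `a` gives
`Var f ≤ u⁻¹ inf_a ∫ w (f - a)² + μ(w < u) Osc(f)²`, into which the weighted Poincaré
inequality is substituted.
-/

open MeasureTheory ProbabilityTheory Set

lemma integral_sq_sub_sq_integral_le {α : Type*} [MeasurableSpace α] {μ : Measure α}
    [IsProbabilityMeasure μ] {f : α → ℝ} (hf : MemLp f 2 μ) (a : ℝ) :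
    ∫ x, f x ^ 2 ∂μ - (∫ x, f x ∂μ) ^ 2 ≤ ∫ x, (f x - a) ^ 2 ∂μ := by
  have h : Var[fun x ↦ f x - a; μ] ≤ μ[(fun x ↦ f x - a) ^ 2] :=
    variance_le_expectation_sq (hf.aestronglyMeasurable.sub aestronglyMeasurable_const)
  rw [variance_sub_const hf.aestronglyMeasurable, variance_eq_sub hf] at h
  simpa using h

lemma sq_sub_projIcc_le_inv_mul_add_ite {m s y : ℝ} (hms : m ≤ s) (hy : y ∈ Icc m s) (a : ℝ)
    {w u : ℝ} (hw : 0 ≤ w) (hu : 0 < u) :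
    (y - projIcc m s hms a) ^ 2 ≤ u⁻¹ * (w * (y - a) ^ 2) + if w < u then (s - m) ^ 2 else 0 := by
  have hcloser : (y - projIcc m s hms a) ^ 2 ≤ (y - a) ^ 2 := by
    have h := abs_projIcc_sub_projIcc hms (c := y) (d := a)
    rwa [projIcc_of_mem hms hy, ← sq_le_sq] at h
  split_ifs with hwu
  · have hosc : (y - projIcc m s hms a) ^ 2 ≤ (s - m) ^ 2 := by
      have ha' := (projIcc m s hms a).2
      rw [sq_le_sq, abs_of_nonneg (sub_nonneg.2 hms), abs_sub_le_iff]
      constructor <;> linarith [hy.1, hy.2, ha'.1, ha'.2]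
    have : 0 ≤ u⁻¹ * (w * (y - a) ^ 2) := by positivity
    linarith
  · have : (y - a) ^ 2 ≤ u⁻¹ * (w * (y - a) ^ 2) := by
      rw [← mul_assoc, inv_mul_eq_div]
      exact le_mul_of_one_le_left (sq_nonneg _) ((one_le_div hu).2 (not_lt.1 hwu))
    linarith

section

variable {α : Type*} [MeasurableSpace α] {μ : Measure α} [IsProbabilityMeasure μ]
  {f w : α → ℝ} {m s u : ℝ}

lemma integral_sq_sub_sq_integral_le_inv_mul_add (hf : AEStronglyMeasurable f μ)
    (hfI : ∀ x, f x ∈ Icc m s) (hwm : Measurable w) (hw0 : ∀ x, 0 ≤ w x) {a : ℝ}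
    (hwa : Integrable (fun x ↦ w x * (f x - a) ^ 2) μ) (hu : 0 < u) :
    ∫ x, f x ^ 2 ∂μ - (∫ x, f x ∂μ) ^ 2 ≤
      u⁻¹ * ∫ x, w x * (f x - a) ^ 2 ∂μ + μ.real {x | w x < u} * (s - m) ^ 2 := by
  obtain ⟨x₀⟩ := nonempty_of_isProbabilityMeasure μ
  have hms : m ≤ s := (hfI x₀).1.trans (hfI x₀).2
  have hf2 : MemLp f 2 μ := memLp_of_bounded (ae_of_all _ hfI) hf 2
  have hS : MeasurableSet {x | w x < u} := measurableSet_lt hwm measurable_const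
  set a' : ℝ := (projIcc m s hms a : ℝ)
  have hbound : ∀ x, (f x - a') ^ 2 ≤
      u⁻¹ * (w x * (f x - a) ^ 2) + {x | w x < u}.indicator (fun _ ↦ (s - m) ^ 2) x := fun x ↦ by
    simpa only [indicator_apply, mem_ofPred_eq] using
      sq_sub_projIcc_le_inv_mul_add_ite hms (hfI x) a (hw0 x) hu
  have hwa' : Integrable (fun x ↦ u⁻¹ * (w x * (f x - a) ^ 2)) μ := hwa.const_mul _
  have hind : Integrable ({x | w x < u}.indicator fun _ ↦ (s - m) ^ 2) μ :=
    (integrable_const _).indicator hS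
  calc _ ≤ ∫ x, (f x - a') ^ 2 ∂μ := integral_sq_sub_sq_integral_le hf2 a'
    _ ≤ ∫ x, (u⁻¹ * (w x * (f x - a) ^ 2) + {x | w x < u}.indicator (fun _ ↦ (s - m) ^ 2) x) ∂μ :=
      integral_mono (hf2.sub (memLp_const a')).integrable_sq (hwa'.add hind) hbound
    _ = _ := by
      rw [integral_add hwa' hind, integral_const_mul, integral_indicator_const _ hS, smul_eq_mul]

lemma integral_sq_sub_sq_integral_le_inv_mul_iInf_add (hf : AEStronglyMeasurable f μ)
    (hfI : ∀ x, f x ∈ Icc m s) (hwm : Measurable w) (hw0 : ∀ x, 0 ≤ w x) (hw1 : ∀ x, w x ≤ 1)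
    (hu : 0 < u) :
    ∫ x, f x ^ 2 ∂μ - (∫ x, f x ∂μ) ^ 2 ≤
      u⁻¹ * (⨅ a : ℝ, ∫ x, w x * (f x - a) ^ 2 ∂μ) + μ.real {x | w x < u} * (s - m) ^ 2 := by
  have hf2 : MemLp f 2 μ := memLp_of_bounded (ae_of_all _ hfI) hf 2
  have hwa (a : ℝ) : Integrable (fun x ↦ w x * (f x - a) ^ 2) μ :=
    (hf2.sub (memLp_const a)).integrable_sq.bdd_mul hwm.aestronglyMeasurable
      (ae_of_all _ fun x ↦ by rw [Real.norm_eq_abs, abs_of_nonneg (hw0 x)]; exact hw1 x)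
  rw [Real.mul_iInf_of_nonneg (inv_nonneg.2 hu.le), ← sub_le_iff_le_add]
  exact le_ciInf fun a ↦ sub_le_iff_le_add.2
    (integral_sq_sub_sq_integral_le_inv_mul_add hf hfI hwm hw0 (hwa a) hu)

end

theorem weak_poincare_of_weighted_poincare_general
    {n : ℕ} (μ : Measure (EuclideanSpace ℝ (Fin n))) [IsProbabilityMeasure μ]
    (w : EuclideanSpace ℝ (Fin n) → ℝ) (hwm : Measurable w)
    (hw0 : ∀ x, 0 ≤ w x) (hw1 : ∀ x, w x ≤ 1)
    (C : ℝ)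
    (hWP : ∀ f : EuclideanSpace ℝ (Fin n) → ℝ, ContDiff ℝ (⊤ : ℕ∞) f →
      (∃ M, ∀ x, |f x| ≤ M) →
      (⨅ a : ℝ, ∫ x, w x * (f x - a) ^ 2 ∂μ) ≤ C * ∫ x, ‖gradient f x‖ ^ 2 ∂μ)
    (u : ℝ) (hu : 0 < u)
    (f : EuclideanSpace ℝ (Fin n) → ℝ) (hf : ContDiff ℝ (⊤ : ℕ∞) f)
    (hfb : ∃ M, ∀ x, |f x| ≤ M) :
    (∫ x, (f x) ^ 2 ∂μ) - (∫ x, f x ∂μ) ^ 2 ≤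
      (C / u) * (∫ x, ‖gradient f x‖ ^ 2 ∂μ) +
        (μ {x | w x < u}).toReal * ((⨆ x, f x) - ⨅ x, f x) ^ 2 := by
  obtain ⟨M, hM⟩ := hfb
  have hfI : ∀ x, f x ∈ Icc (⨅ x, f x) (⨆ x, f x) := fun x ↦
    ⟨ciInf_le ⟨-M, forall_mem_range.2 fun y ↦ (abs_le.1 (hM y)).1⟩ x,
      le_ciSup ⟨M, forall_mem_range.2 fun y ↦ (abs_le.1 (hM y)).2⟩ x⟩
  calc _ ≤ u⁻¹ * (⨅ a : ℝ, ∫ x, w x * (f x - a) ^ 2 ∂μ) +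
          μ.real {x | w x < u} * ((⨆ x, f x) - ⨅ x, f x) ^ 2 :=
        integral_sq_sub_sq_integral_le_inv_mul_iInf_add hf.continuous.aestronglyMeasurable hfI
          hwm hw0 hw1 hu
    _ ≤ u⁻¹ * (C * ∫ x, ‖gradient f x‖ ^ 2 ∂μ) +
          μ.real {x | w x < u} * ((⨆ x, f x) - ⨅ x, f x) ^ 2 := by
        gcongr
        exact hWP f hf ⟨M, hM⟩
    _ = _ := by rw [measureReal_def]; ring

/-- Let `μ` be a probability measure on `ℝⁿ`, `w : ℝⁿ → [0,1]` measurable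
with `∫ w dμ > 0`, and `C ≥ 0` such that the weighted Poincaré inequality
`inf_a ∫ w (f − a)² dμ ≤ C ∫ |∇f|² dμ` holds for all bounded smooth `f`.  Then for every
`u > 0` and every bounded smooth `f`,
`Var_μ(f) ≤ (C/u) ∫ |∇f|² dμ + μ({w < u}) Osc(f)²`. -/
theorem weak_poincare_of_weighted_poincare
    {n : ℕ} (μ : Measure (EuclideanSpace ℝ (Fin n))) [IsProbabilityMeasure μ]
    (w : EuclideanSpace ℝ (Fin n) → ℝ) (hwm : Measurable w)
    (hw0 : ∀ x, 0 ≤ w x) (hw1 : ∀ x, w x ≤ 1) (hwpos : 0 < ∫ x, w x ∂μ)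
    (C : ℝ) (hC : 0 ≤ C)
    (hWP : ∀ f : EuclideanSpace ℝ (Fin n) → ℝ, ContDiff ℝ (⊤ : ℕ∞) f →
      (∃ M, ∀ x, |f x| ≤ M) →
      (⨅ a : ℝ, ∫ x, w x * (f x - a) ^ 2 ∂μ) ≤ C * ∫ x, ‖gradient f x‖ ^ 2 ∂μ)
    (u : ℝ) (hu : 0 < u)
    (f : EuclideanSpace ℝ (Fin n) → ℝ) (hf : ContDiff ℝ (⊤ : ℕ∞) f)
    (hfb : ∃ M, ∀ x, |f x| ≤ M) :
    (∫ x, (f x) ^ 2 ∂μ) - (∫ x, f x ∂μ) ^ 2 ≤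
      (C / u) * (∫ x, ‖gradient f x‖ ^ 2 ∂μ) +
        (μ {x | w x < u}).toReal * ((⨆ x, f x) - ⨅ x, f x) ^ 2 :=
  weak_poincare_of_weighted_poincare_general μ w hwm hw0 hw1 C hWP u hu f hf hfb
end
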